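/- arXiv:2303.05606 — 2 statements merged into one kernel-verified Lean document; each statement's English description precedes it below -/
import Mathlib

section
/- Let A and B be positive definite d×d real matrices with A ⪰ B. Then for every x ∈ ℝ^d, ‖x‖_{B^{-1}} ≤ ‖x‖_{A^{-1}} · √(det(A)/det(B)), where ‖x‖_M := √(x^T M x). -/
/-!
Conjugating by `A^{-1/2}` turns `B ≤ A` into `C := A^{-1/2} B A^{-1/2} ≤ 1` with `C` positive
definite and `det C = det B / det A`. All eigenvalues of `C` lie in `(0, 1]`, so each of them is at
least their product `det C`; hence `C⁻¹ ≤ (det C)⁻¹`, and conjugating back gives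
`B⁻¹ ≤ (det A / det B) • A⁻¹` in the Loewner order.
-/

open Matrix

namespace Matrix

open CFC Ring
open scoped MatrixOrder

variable {n : Type*} [Fintype n]

theorem dotProduct_mulVec_le_of_le {M N : Matrix n n ℝ} (h : M ≤ N) (x : n → ℝ) :
    x ⬝ᵥ M *ᵥ x ≤ x ⬝ᵥ N *ᵥ x := by
  have := (le_iff.mp h).dotProduct_mulVec_nonneg x
  rwa [star_trivial, sub_mulVec, dotProduct_sub, sub_nonneg] at this

variable [DecidableEq n]

theorem det_conjSqrt {𝕜 : Type*} [RCLike 𝕜] {c : Matrix n n 𝕜} (hc : 0 ≤ c)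
    (a : Matrix n n 𝕜) : (conjSqrt c a).det = c.det * a.det := by
  rw [conjSqrt_apply, det_mul, det_mul, mul_right_comm, ← det_mul, sqrt_mul_sqrt_self c hc]

theorem det_le_of_mem_spectrum {C : Matrix n n ℝ} (hC : 0 ≤ C) (hC1 : C ≤ 1) {x : ℝ}
    (hx : x ∈ spectrum ℝ C) : C.det ≤ x := by
  have hC' : C.PosSemidef := nonneg_iff_posSemidef.mp hC
  obtain ⟨i, rfl⟩ := hC'.isHermitian.spectrum_real_eq_range_eigenvalues ▸ hx
  have hle_one : ∀ j, hC'.isHermitian.eigenvalues j ≤ 1 := fun j =>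
    (le_algebraMap_iff_spectrum_le (r := (1 : ℝ))).mp (by simpa using hC1) _
      (hC'.isHermitian.eigenvalues_mem_spectrum_real j)
  rw [hC'.isHermitian.det_eq_prod_eigenvalues]
  simpa using Finset.prod_le_prod_of_subset_of_le_one (Finset.subset_univ {i})
    (fun j _ => hC'.eigenvalues_nonneg j) fun j _ _ => hle_one j

theorem inv_le_algebraMap_inv_det {C : Matrix n n ℝ} (hC : C.PosDef) (hC1 : C ≤ 1) :
    C⁻¹ ≤ algebraMap ℝ _ C.det⁻¹ := by
  have hunit : IsUnit C := hC.isStrictlyPositive.isUnit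
  have hcont : ContinuousOn (fun x : ℝ => x⁻¹) (spectrum ℝ C) :=
    continuousOn_inv₀.mono fun x hx => by rintro rfl; exact spectrum.zero_notMem ℝ hunit hx
  rw [nonsing_inv_eq_ringInverse, ← cfc_ringInverse_id (R := ℝ) C hunit,
    cfc_le_algebraMap_iff _ _ C hcont]
  exact fun x hx => inv_anti₀ hC.det_pos (det_le_of_mem_spectrum hC.posSemidef.nonneg hC1 hx)

theorem inv_le_det_div_smul_inv {A B : Matrix n n ℝ} (hA : A.PosDef) (hB : B.PosDef)
    (hBA : B ≤ A) : B⁻¹ ≤ (A.det / B.det) • A⁻¹ := by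
  have hA' : IsStrictlyPositive A := hA.isStrictlyPositive
  set C := conjSqrt A⁻¹ʳ B
  have hC : C.PosDef :=
    ((isStrictlyPositive_conjSqrt_iff _ B hA'.ringInverse).mpr hB.isStrictlyPositive).posDef
  have hC1 : C ≤ 1 := conjSqrt_ringInverse_self A hA' ▸ conjSqrt_le_conjSqrt hBA
  have hC_det : C.det = B.det / A.det := by
    rw [det_conjSqrt hA'.ringInverse.nonneg, ← nonsing_inv_eq_ringInverse, det_nonsing_inv,
      Ring.inverse_eq_inv', inv_mul_eq_div]
  have hC_inv : C⁻¹ = conjSqrt A B⁻¹ := by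
    rw [nonsing_inv_eq_ringInverse, ringInverse_conjSqrt _ _ hA'.ringInverse,
      Ring.inverse_inverse hA'.isUnit, nonsing_inv_eq_ringInverse]
  calc B⁻¹ = conjSqrt A⁻¹ʳ C⁻¹ := by
        rw [hC_inv, nonsing_inv_eq_ringInverse, conjSqrt_ringInverse_conjSqrt _ _ hA']
    _ ≤ conjSqrt A⁻¹ʳ (algebraMap ℝ _ C.det⁻¹) :=
        conjSqrt_le_conjSqrt (inv_le_algebraMap_inv_det hC hC1)
    _ = (A.det / B.det) • A⁻¹ := by
        rw [Algebra.algebraMap_eq_smul_one, map_smul, conjSqrt_one _ hA'.ringInverse.nonneg,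
          hC_det, inv_div, nonsing_inv_eq_ringInverse]

end Matrix

/-- If `A ⪰ B` with both positive definite, then for every `x`,
`‖x‖_{B⁻¹} ≤ ‖x‖_{A⁻¹} · √(det A / det B)` where `‖x‖_M := √(xᵀ M x)`. -/
theorem norm_inv_le_det_ratio (d : ℕ) (A B : Matrix (Fin d) (Fin d) ℝ)
    (hA : A.PosDef) (hB : B.PosDef) (hAB : (A - B).PosSemidef) (x : Fin d → ℝ) :
    Real.sqrt (x ⬝ᵥ B⁻¹ *ᵥ x) ≤
      Real.sqrt (x ⬝ᵥ A⁻¹ *ᵥ x) * Real.sqrt (A.det / B.det) := by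
  have hquad : x ⬝ᵥ B⁻¹ *ᵥ x ≤ (x ⬝ᵥ A⁻¹ *ᵥ x) * (A.det / B.det) := by
    simpa only [smul_mulVec, dotProduct_smul, smul_eq_mul, mul_comm (A.det / B.det)] using
      dotProduct_mulVec_le_of_le (inv_le_det_div_smul_inv hA hB hAB) x
  rw [← Real.sqrt_mul (by simpa using hA.inv.posSemidef.dotProduct_mulVec_nonneg x)]
  exact Real.sqrt_le_sqrt hquad
end

section
/- Elliptical potential lemma: Let x_1, …, x_T ∈ ℝ^d with ‖x_t‖ ≤ L for all t, let λ > 0, and set Z_0 = λI, Z_t = Z_{t−1} + x_t x_t^T. Then ∑_{t=1}^T min{1, x_t^T Z_{t−1}^{-1} x_t} ≤ 2d·log((dλ + T L²)/(dλ)). -/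
open Matrix Finset

/-! Auxiliary lemmas -/

private lemma sum_Icc_one_eq_range {M : Type*} [AddCommMonoid M] (f : ℕ → M) (T : ℕ) :
    ∑ t ∈ Finset.Icc 1 T, f t = ∑ s ∈ Finset.range T, f (s + 1) := by
  rw [← Finset.Ico_add_one_right_eq_Icc, Finset.sum_Ico_eq_sum_range]
  simp [add_comm]

private lemma vecMulVec_posSemidef {d : ℕ} (u : Fin d → ℝ) :
    (Matrix.vecMulVec u u).PosSemidef := by
  refine Matrix.PosSemidef.of_dotProduct_mulVec_nonneg ?_ ?_
  · ext i j
    simp [Matrix.vecMulVec, Matrix.conjTranspose_apply, mul_comm]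
  · intro v
    have h : dotProduct (star v) (Matrix.vecMulVec u u *ᵥ v) = (u ⬝ᵥ v) ^ 2 := by
      simp only [star_trivial, dotProduct, Matrix.mulVec, Matrix.vecMulVec_apply, sq,
        Finset.sum_mul, Finset.mul_sum, dotProduct]
      rw [Finset.sum_comm]
      apply Finset.sum_congr rfl; intro i _
      apply Finset.sum_congr rfl; intro j _
      ring
    rw [h]
    positivity

private lemma smul_one_posDef {d : ℕ} {lam : ℝ} (hlam : 0 < lam) :
    (lam • (1 : Matrix (Fin d) (Fin d) ℝ)).PosDef := by
  refine Matrix.PosDef.of_dotProduct_mulVec_pos ?_ ?_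
  · ext i j
    simp [Matrix.conjTranspose_apply, Matrix.one_apply, eq_comm]
  · intro v hv
    have h : dotProduct (star v) ((lam • (1 : Matrix (Fin d) (Fin d) ℝ)) *ᵥ v)
        = lam * ∑ i, v i ^ 2 := by
      simp only [star_trivial, Matrix.smul_mulVec, Matrix.one_mulVec, dotProduct,
        Pi.smul_apply, smul_eq_mul, Finset.mul_sum, sq]
      exact Finset.sum_congr rfl fun i _ => by ring
    rw [h]
    have h2 : 0 < ∑ i, v i ^ 2 := by
      obtain ⟨i, hi⟩ := Function.ne_iff.mp hv
      exact Finset.sum_pos' (fun j _ => sq_nonneg _)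
        ⟨i, Finset.mem_univ i, lt_of_le_of_ne (sq_nonneg _) (Ne.symm (pow_ne_zero 2 hi))⟩
    positivity

/-- Matrix determinant lemma specialized to a symmetric rank-one update. -/
private lemma det_add_outer {d : ℕ} {A : Matrix (Fin d) (Fin d) ℝ} (hA : A.PosDef)
    (u : Fin d → ℝ) :
    (A + Matrix.vecMulVec u u).det = A.det * (1 + u ⬝ᵥ A⁻¹ *ᵥ u) := by
  have hdet : IsUnit A.det := hA.det_pos.ne'.isUnit
  rw [Matrix.vecMulVec_eq Unit u u, Matrix.det_add_replicateCol_mul_replicateRow hdet u u]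
  congr 1
  rw [Matrix.det_unique]
  simp only [Pi.add_apply, Matrix.one_apply_eq, Matrix.add_apply]
  congr 1
  simp only [Matrix.mul_apply, Matrix.replicateRow_apply, Matrix.replicateCol_apply, dotProduct, Matrix.mulVec,
    Finset.univ_unique, Finset.sum_singleton]
  simp_rw [Finset.sum_mul, Finset.mul_sum]
  rw [Finset.sum_comm]
  exact Finset.sum_congr rfl fun i _ => Finset.sum_congr rfl fun j _ => by ring

private lemma trace_eq_sum_eigenvalues' {d : ℕ} {A : Matrix (Fin d) (Fin d) ℝ}
    (hA : A.IsHermitian) : A.trace = ∑ i, hA.eigenvalues i := by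
  simpa using hA.trace_eq_sum_eigenvalues

private lemma trace_pos_of_posDef {d : ℕ} (hd : 0 < d) {A : Matrix (Fin d) (Fin d) ℝ}
    (hA : A.PosDef) : 0 < A.trace := by
  have hherm := hA.isHermitian
  rw [trace_eq_sum_eigenvalues' hherm]
  have : Nonempty (Fin d) := Fin.pos_iff_nonempty.mp hd
  exact Finset.sum_pos (fun i _ => hA.eigenvalues_pos i) Finset.univ_nonempty

/-- AM-GM for determinants: `det A ≤ (trace A / d) ^ d` for positive definite `A`. -/
private lemma det_le_trace_pow {d : ℕ} (hd : 0 < d) {A : Matrix (Fin d) (Fin d) ℝ}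
    (hA : A.PosDef) : A.det ≤ (A.trace / d) ^ d := by
  have hherm := hA.isHermitian
  have hev : ∀ i, 0 < hherm.eigenvalues i := hA.eigenvalues_pos
  have hdet : A.det = ∏ i, hherm.eigenvalues i := by
    simpa using hherm.det_eq_prod_eigenvalues
  have htr : A.trace = ∑ i, hherm.eigenvalues i := trace_eq_sum_eigenvalues' hherm
  set z := hherm.eigenvalues with hz
  have hdR : (0:ℝ) < d := by exact_mod_cast hd
  have amgm : ∏ i, (z i) ^ ((d:ℝ)⁻¹) ≤ ∑ i : Fin d, (d:ℝ)⁻¹ * z i := by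
    apply Real.geom_mean_le_arith_mean_weighted Finset.univ (fun _ => (d:ℝ)⁻¹) z
      (fun i _ => by positivity) ?_ (fun i _ => (hev i).le)
    rw [Finset.sum_const, Finset.card_univ, Fintype.card_fin, nsmul_eq_mul]
    field_simp
  have hprod : A.det = (∏ i, (z i) ^ ((d:ℝ)⁻¹)) ^ d := by
    rw [hdet, ← Finset.prod_pow]
    apply Finset.prod_congr rfl
    intro i _
    rw [← Real.rpow_natCast ((z i) ^ ((d:ℝ)⁻¹)) d, ← Real.rpow_mul (hev i).le,
      inv_mul_cancel₀ hdR.ne', Real.rpow_one]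
  have hsum : ∑ i : Fin d, (d:ℝ)⁻¹ * z i = A.trace / d := by
    rw [htr, ← Finset.mul_sum]
    ring
  rw [hprod]
  calc (∏ i, (z i) ^ ((d:ℝ)⁻¹)) ^ d ≤ (∑ i : Fin d, (d:ℝ)⁻¹ * z i) ^ d := by
        apply pow_le_pow_left₀ _ amgm
        exact Finset.prod_nonneg fun i _ => Real.rpow_nonneg (hev i).le _
    _ = (A.trace / d) ^ d := by rw [hsum]

private lemma min_one_le_two_log {u : ℝ} (hu : 0 ≤ u) :
    min 1 u ≤ 2 * Real.log (1 + u) := by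
  have h1 : (0:ℝ) < 1 + u := by linarith
  rcases le_total u 1 with h | h
  · rw [min_eq_right h]
    have hlog : 1 - (1 + u)⁻¹ ≤ Real.log (1 + u) := by
      have h2 := Real.log_le_sub_one_of_pos (x := (1 + u)⁻¹) (by positivity)
      rw [Real.log_inv] at h2
      linarith
    have heq : 1 - (1 + u)⁻¹ = u / (1 + u) := by field_simp; ring
    have h2 : u ≤ 2 * (u / (1 + u)) := by
      rw [show 2 * (u / (1 + u)) = 2 * u / (1 + u) by ring, le_div_iff₀ h1]
      nlinarith
    rw [heq] at hlog
    linarith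
  · rw [min_eq_left h]
    have h2 : Real.log 2 ≤ Real.log (1 + u) :=
      Real.log_le_log (by norm_num) (by linarith)
    linarith [Real.log_two_gt_d9]

/-- Elliptical potential lemma: with `Z_0 = λI`, `Z_t = Z_{t−1} + x_t x_tᵀ` and
`‖x_t‖ ≤ L`, one has
`∑_{t=1}^T min{1, x_tᵀ Z_{t−1}⁻¹ x_t} ≤ 2d·log((dλ + T L²)/(dλ))`. -/
theorem elliptical_potential (d T : ℕ) (hd : 0 < d) (L lam : ℝ) (hlam : 0 < lam)
    (x : ℕ → Fin d → ℝ) (hx : ∀ t, Real.sqrt (∑ i, (x t i) ^ 2) ≤ L)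
    (Z : ℕ → Matrix (Fin d) (Fin d) ℝ)
    (hZ0 : Z 0 = lam • (1 : Matrix (Fin d) (Fin d) ℝ))
    (hZ : ∀ t : ℕ, Z (t + 1) = Z t + Matrix.vecMulVec (x (t + 1)) (x (t + 1))) :
    ∑ t ∈ Finset.Icc 1 T, min 1 (x t ⬝ᵥ (Z (t - 1))⁻¹ *ᵥ x t) ≤
      2 * d * Real.log ((d * lam + T * L ^ 2) / (d * lam)) := by
  have hdR : (0:ℝ) < d := by exact_mod_cast hd
  -- positive definiteness of all Z t
  have hpos : ∀ t, (Z t).PosDef := by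
    intro t
    induction t with
    | zero => rw [hZ0]; exact smul_one_posDef hlam
    | succ t ih => rw [hZ t]; exact ih.add_posSemidef (vecMulVec_posSemidef _)
  set u : ℕ → ℝ := fun s => x (s + 1) ⬝ᵥ (Z s)⁻¹ *ᵥ x (s + 1) with hu_def
  have hunn : ∀ s, 0 ≤ u s := by
    intro s
    have h := ((hpos s).inv).posSemidef.dotProduct_mulVec_nonneg (x (s + 1))
    simpa using h
  have hL0 : 0 ≤ L := le_trans (Real.sqrt_nonneg _) (hx 0)
  have hxsq : ∀ t, ∑ i, (x t i) ^ 2 ≤ L ^ 2 := by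
    intro t
    calc ∑ i, (x t i) ^ 2 = (Real.sqrt (∑ i, (x t i) ^ 2)) ^ 2 :=
          (Real.sq_sqrt (by positivity)).symm
      _ ≤ L ^ 2 := pow_le_pow_left₀ (Real.sqrt_nonneg _) (hx t) 2
  -- telescoping of log det
  have hlogdet : ∀ n, Real.log (Z n).det =
      d * Real.log lam + ∑ s ∈ Finset.range n, Real.log (1 + u s) := by
    intro n
    induction n with
    | zero =>
      rw [hZ0]
      simp [Matrix.det_smul, Real.log_pow]
    | succ n ih =>
      have hdetstep : (Z (n + 1)).det = (Z n).det * (1 + u n) := by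
        rw [hZ n, det_add_outer (hpos n)]
      rw [hdetstep, Real.log_mul (hpos n).det_pos.ne'
        (by have := hunn n; linarith), ih, Finset.sum_range_succ]
      ring
  -- trace bound
  have htrace : ∀ n, (Z n).trace ≤ d * lam + n * L ^ 2 := by
    intro n
    induction n with
    | zero =>
      rw [hZ0]
      simp [Matrix.trace_smul, Matrix.trace_one, mul_comm]
    | succ n ih =>
      have h1 : (Matrix.vecMulVec (x (n + 1)) (x (n + 1))).trace
          = ∑ i, (x (n + 1) i) ^ 2 := by
        simp [Matrix.trace, Matrix.diag, Matrix.vecMulVec_apply, sq]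
      rw [hZ n, Matrix.trace_add, h1]
      have h2 := hxsq (n + 1)
      push_cast
      linarith
  -- key log bound
  have hkey : Real.log (Z T).det - d * Real.log lam ≤
      d * Real.log ((d * lam + T * L ^ 2) / (d * lam)) := by
    have htpos : 0 < (Z T).trace := trace_pos_of_posDef hd (hpos T)
    have h1 : Real.log (Z T).det ≤ d * Real.log ((Z T).trace / d) := by
      have := det_le_trace_pow hd (hpos T)
      calc Real.log (Z T).det ≤ Real.log (((Z T).trace / d) ^ d) :=
            Real.log_le_log (hpos T).det_pos this
        _ = d * Real.log ((Z T).trace / d) := by rw [Real.log_pow]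
    have h2 : Real.log ((Z T).trace / d) - Real.log lam
        = Real.log ((Z T).trace / (d * lam)) := by
      rw [← Real.log_div (by positivity) hlam.ne', div_div]
    have h3 : Real.log ((Z T).trace / (d * lam)) ≤
        Real.log ((d * lam + T * L ^ 2) / (d * lam)) := by
      apply Real.log_le_log (by positivity)
      exact (div_le_div_iff_of_pos_right (by positivity)).mpr (htrace T)
    calc Real.log (Z T).det - d * Real.log lam
        ≤ d * Real.log ((Z T).trace / d) - d * Real.log lam := by linarith
      _ = d * (Real.log ((Z T).trace / d) - Real.log lam) := by ring
      _ = d * Real.log ((Z T).trace / (d * lam)) := by rw [h2]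
      _ ≤ d * Real.log ((d * lam + T * L ^ 2) / (d * lam)) := by
          exact mul_le_mul_of_nonneg_left h3 hdR.le
  -- assemble
  have hsum : ∑ t ∈ Finset.Icc 1 T, min 1 (x t ⬝ᵥ (Z (t - 1))⁻¹ *ᵥ x t)
      = ∑ s ∈ Finset.range T, min 1 (u s) := by
    rw [sum_Icc_one_eq_range (fun t => min 1 (x t ⬝ᵥ (Z (t - 1))⁻¹ *ᵥ x t)) T]
    simp only [Nat.add_sub_cancel]
    rfl
  rw [hsum]
  calc ∑ s ∈ Finset.range T, min 1 (u s)
      ≤ ∑ s ∈ Finset.range T, 2 * Real.log (1 + u s) :=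
        Finset.sum_le_sum fun s _ => min_one_le_two_log (hunn s)
    _ = 2 * (Real.log (Z T).det - d * Real.log lam) := by
        rw [← Finset.mul_sum]
        have := hlogdet T
        linarith [hlogdet T]
    _ ≤ 2 * (d * Real.log ((d * lam + T * L ^ 2) / (d * lam))) :=
        mul_le_mul_of_nonneg_left hkey (by norm_num)
    _ = 2 * d * Real.log ((d * lam + T * L ^ 2) / (d * lam)) := by ring
end
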